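/- The family {f_{mn} : m, n ∈ ℕ} is orthonormal in L²(ℝ²) with respect to the inner product ⟨f, g⟩ := ½ ∫ conj(f(u)) g(u) du: for all m, n, k, l ∈ ℕ, ½ ∫ conj(f_{mn}(u)) f_{kl}(u) du = 1 if (m,n) = (k,l), and = 0 otherwise. -/

import Mathlib

open MeasureTheory SchwartzMap Complex

noncomputable section

def symp2 (u v : ℝ × ℝ) : ℝ := u.1 * v.2 - u.2 * v.1

def mes2 : Measure (ℝ × ℝ) := (ENNReal.ofReal (2 * Real.pi))⁻¹ • (volume : Measure (ℝ × ℝ))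

def twProd2 (f g : ℝ × ℝ → ℂ) : ℝ × ℝ → ℂ := fun u =>
  ∫ s, ∫ t, f (u + s) * g (u + t) * Complex.exp (Complex.I * (symp2 s t : ℂ)) ∂mes2 ∂mes2

/-- The Gaussian `f₀(q,p) = 2 e^{-(q²+p²)/2}`. -/
def f0 (u : ℝ × ℝ) : ℂ := 2 * Complex.exp (-((u.1 ^ 2 + u.2 ^ 2 : ℝ) : ℂ) / 2)

/-- `a = (q + ip)/√2`. -/
def aop (u : ℝ × ℝ) : ℂ := ((u.1 : ℂ) + Complex.I * (u.2 : ℂ)) / (Real.sqrt 2 : ℂ)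

/-- `ā = (q - ip)/√2`. -/
def abar (u : ℝ × ℝ) : ℂ := ((u.1 : ℂ) - Complex.I * (u.2 : ℂ)) / (Real.sqrt 2 : ℂ)

/-- The twisted Hermite functions `f_{mn}`. -/
def fmn (m n : ℕ) : ℝ × ℝ → ℂ := fun u =>
  ((Real.sqrt (2 ^ (m + n) * m.factorial * n.factorial) : ℝ) : ℂ)⁻¹ *
    ∑ k ∈ Finset.range (min m n + 1),
      (-1 : ℂ) ^ k * (m.choose k : ℂ) * (n.choose k : ℂ) * (k.factorial : ℂ) *
        2 ^ (m + n - k) * abar u ^ (m - k) * aop u ^ (n - k) * f0 u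

/-!
In the coordinate `z = q + ip` one has `ā = z̄/√2`, `a = z/√2` and `f₀ = 2 e^{-|z|²/2}`, so
`f_{mn} = 2 (m! n!)^{-1/2} H_{mn}(z) e^{-|z|²/2}` with the complex Hermite polynomial
`H_{mn}(z) = ∑_j (-1)^j C(m,j) C(n,j) j! z̄^{m-j} z^{n-j}`. In polar coordinates
`∫ z̄^A z^B e^{-|z|²} dz = δ_{AB} π A!`, so the pairing of `H_{mn}` with `H_{kl}` vanishes unless
`n + k = m + l`, and then it is a double alternating sum of binomial coefficients. Both sums
collapse by `∑_i (-1)^i C(k,i) C(N-i,r) = C(N-k,r-k)`, the `k`-th forward difference of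
`x ↦ C(x,r)`, leaving `δ_{mk} π m! n!`.
-/

open Finset fwdDiff ComplexConjugate
open scoped Nat Real

lemma fwdDiff_iter_choose_eq_ite (k r : ℕ) :
    (fwdDiff 1)^[k] (fun x ↦ (x.choose r : ℤ)) =
      if k ≤ r then fun x ↦ (x.choose (r - k) : ℤ) else (0 : ℕ → ℤ) := by
  split_ifs with hkr
  · obtain ⟨j, rfl⟩ := Nat.exists_eq_add_of_le hkr
    rw [Nat.add_sub_cancel_left, fwdDiff_iter_choose]
  · obtain ⟨j, rfl⟩ := Nat.exists_eq_add_of_lt (not_le.mp hkr)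
    have h := fwdDiff_iter_choose 0 r
    rw [Nat.add_zero] at h
    rw [show r + j + 1 = j + 1 + r by ring, Function.iterate_add_apply, h,
      Function.iterate_succ_apply]
    simp only [Nat.choose_zero_right, Nat.cast_one, fwdDiff_const]
    exact Function.iterate_fixed (by simp) j

lemma sum_range_alternating_choose_mul_choose_sub {k N : ℕ} (hkN : k ≤ N) (r : ℕ) :
    ∑ i ∈ range (k + 1), (-1 : ℤ) ^ i * k.choose i * (N - i).choose r =
      if k ≤ r then ((N - k).choose (r - k) : ℤ) else 0 := by
  have := congrFun (fwdDiff_iter_choose_eq_ite k r) (N - k)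
  rw [fwdDiff_iter_eq_sum_shift, ← sum_range_reflect, apply_ite (fun f : ℕ → ℤ ↦ f (N - k)),
    Pi.zero_apply] at this
  rw [← this]
  refine sum_congr rfl fun i hi ↦ ?_
  have hik : i ≤ k := Nat.lt_succ_iff.mp (mem_range.mp hi)
  rw [show k + 1 - 1 - i = k - i by omega, Nat.choose_symm hik, smul_eq_mul, smul_eq_mul,
    mul_one, show N - k + (k - i) = N - i by omega, Nat.sub_sub_self hik]

lemma Nat.choose_mul_factorial_mul_factorial_sub {i l M : ℕ} (hiM : i ≤ M) (hlM : l ≤ M) :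
    l.choose i * i ! * (M - i)! = l ! * (M - l)! * (M - i).choose (M - l) := by
  rcases lt_or_ge l i with hli | hil
  · rw [Nat.choose_eq_zero_of_lt hli, Nat.choose_eq_zero_of_lt (by omega)]
    simp
  have hl := Nat.choose_mul_factorial_mul_factorial hil
  have hM := Nat.choose_mul_factorial_mul_factorial (show M - l ≤ M - i by omega)
  rw [show M - i - (M - l) = l - i by omega] at hM
  apply Nat.eq_of_mul_eq_mul_right (Nat.factorial_pos (l - i))
  calc l.choose i * i ! * (M - i)! * (l - i)! = l.choose i * i ! * (l - i)! * (M - i)! := by ring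
    _ = l ! * ((M - i).choose (M - l) * (M - l)! * (l - i)!) := by rw [hl, hM]
    _ = _ := by ring

lemma sum_alternating_choose_mul_choose_mul_factorial {k l M : ℕ} (hkM : k ≤ M) (hlM : l ≤ M) :
    ∑ i ∈ range (min k l + 1), (-1 : ℤ) ^ i * k.choose i * l.choose i * i ! * (M - i)! =
      l ! * (M - l)! * (M - k).choose l := by
  have hvanish : ∀ i ∈ range (k + 1), i ∉ range (min k l + 1) →
      (-1 : ℤ) ^ i * k.choose i * l.choose i * i ! * (M - i)! = 0 := by
    intro i hik hil
    rw [mem_range] at hik hil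
    rw [Nat.choose_eq_zero_of_lt (show l < i by omega)]
    simp
  rw [sum_subset (range_subset_range.mpr (by omega)) hvanish]
  calc ∑ i ∈ range (k + 1), (-1 : ℤ) ^ i * k.choose i * l.choose i * i ! * (M - i)!
      = l ! * (M - l)! *
          ∑ i ∈ range (k + 1), (-1 : ℤ) ^ i * k.choose i * (M - i).choose (M - l) := by
        rw [mul_sum]
        refine sum_congr rfl fun i hi ↦ ?_
        have hiM : i ≤ M := by rw [mem_range] at hi; omega
        have h := congrArg (Nat.cast : ℕ → ℤ) (Nat.choose_mul_factorial_mul_factorial_sub hiM hlM)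
        push_cast at h
        linear_combination (-1 : ℤ) ^ i * k.choose i * h
    _ = _ := by
        rw [sum_range_alternating_choose_mul_choose_sub hkM]
        split_ifs with h
        · rw [Nat.choose_symm_of_eq_add (show M - k = M - l - k + l by omega)]
        · rw [Nat.choose_eq_zero_of_lt (by omega), Nat.cast_zero, mul_zero]

def hermiteCoeff (m n j : ℕ) : ℤ := (-1) ^ j * m.choose j * n.choose j * j !

lemma sum_hermiteCoeff_mul_factorial {m n k l j : ℕ} (h : n + k = m + l) (hjm : j ≤ m)
    (hjn : j ≤ n) :
    ∑ i ∈ range (min k l + 1),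
        hermiteCoeff m n j * hermiteCoeff k l i * ((n - j + (k - i))! : ℤ) =
      m ! * l ! * ((-1) ^ j * n.choose j * (n - j).choose l) := by
  have hsum := sum_alternating_choose_mul_choose_mul_factorial (M := n + k - j)
    (show k ≤ n + k - j by omega) (show l ≤ n + k - j by omega)
  rw [show n + k - j - l = m - j by omega, show n + k - j - k = n - j by omega] at hsum
  have hm := congrArg (Nat.cast : ℕ → ℤ) (Nat.choose_mul_factorial_mul_factorial hjm)
  push_cast at hm
  calc ∑ i ∈ range (min k l + 1),
        hermiteCoeff m n j * hermiteCoeff k l i * ((n - j + (k - i))! : ℤ)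
      = hermiteCoeff m n j * ∑ i ∈ range (min k l + 1),
          (-1 : ℤ) ^ i * k.choose i * l.choose i * i ! * (n + k - j - i)! := by
        rw [mul_sum]
        refine sum_congr rfl fun i hi ↦ ?_
        rw [mem_range] at hi
        rw [hermiteCoeff, hermiteCoeff, show n - j + (k - i) = n + k - j - i by omega]
        ring
    _ = _ := by
        rw [hsum, hermiteCoeff]
        linear_combination ((-1 : ℤ) ^ j * n.choose j * l ! * (n - j).choose l) * hm

lemma sum_sum_hermiteCoeff_mul_factorial {m n k l : ℕ} (h : n + k = m + l) :
    ∑ j ∈ range (min m n + 1), ∑ i ∈ range (min k l + 1),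
        hermiteCoeff m n j * hermiteCoeff k l i * ((n - j + (k - i))! : ℤ) =
      if m = k then (m ! * n ! : ℤ) else 0 := by
  have hinner : ∀ j ∈ range (min m n + 1),
      ∑ i ∈ range (min k l + 1),
          hermiteCoeff m n j * hermiteCoeff k l i * ((n - j + (k - i))! : ℤ) =
        m ! * l ! * ((-1) ^ j * n.choose j * (n - j).choose l) := fun j hj ↦ by
    rw [mem_range] at hj
    exact sum_hermiteCoeff_mul_factorial h (by omega) (by omega)
  have hvanish : ∀ j ∈ range (n + 1), j ∉ range (min m n + 1) →
      (m ! * l ! * ((-1) ^ j * n.choose j * (n - j).choose l) : ℤ) = 0 := by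
    intro j hjn hjm
    rw [mem_range] at hjn hjm
    rw [Nat.choose_eq_zero_of_lt (show n - j < l by omega)]
    simp
  rw [sum_congr rfl hinner, sum_subset (range_subset_range.mpr (by omega)) hvanish, ← mul_sum,
    sum_range_alternating_choose_mul_choose_sub le_rfl, Nat.sub_self]
  by_cases hmk : m = k
  · obtain rfl : n = l := by omega
    simp [hmk, mul_comm]
  · rw [if_neg hmk]
    split_ifs with hnl
    · rw [Nat.choose_eq_zero_of_lt (show 0 < l - n by omega)]
      simp
    · simp

lemma integrable_conj_pow_mul_pow_mul_exp_neg_norm_sq (A B : ℕ) :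
    Integrable fun z : ℂ ↦ conj z ^ A * z ^ B * (Real.exp (-‖z‖ ^ 2) : ℂ) := by
  have hradial : Integrable fun z : ℂ ↦ ‖z‖ ^ (A + B) * Real.exp (-‖z‖ ^ 2) := by
    rw [integrable_fun_norm_addHaar volume (f := fun y ↦ y ^ (A + B) * Real.exp (-y ^ 2)),
      Complex.finrank_real_complex]
    have hs : (-1 : ℝ) < (A + B + 1 : ℕ) := by linarith [(A + B + 1 : ℕ).cast_nonneg (α := ℝ)]
    refine (integrableOn_rpow_mul_exp_neg_mul_sq one_pos hs).congr_fun (fun y _ ↦ ?_)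
      measurableSet_Ioi
    simp only [Real.rpow_natCast, smul_eq_mul, neg_mul, one_mul]
    ring
  refine hradial.mono' (by fun_prop) (.of_forall fun z ↦ ?_)
  rw [norm_mul, norm_mul, norm_pow, norm_pow, RCLike.norm_conj, Complex.norm_real,
    Real.norm_of_nonneg (Real.exp_pos _).le, pow_add]

lemma integral_exp_int_mul_I (n : ℤ) :
    ∫ θ in Set.Ioo (-π) π, cexp (n * θ * I) = if n = 0 then (2 * π : ℂ) else 0 := by
  rw [← integral_Ioc_eq_integral_Ioo,
    ← intervalIntegral.integral_of_le (by linarith [Real.pi_pos])]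
  split_ifs with hn
  · simp only [hn, Int.cast_zero, zero_mul, Complex.exp_zero, intervalIntegral.integral_const,
      sub_neg_eq_add, real_smul, ofReal_add, mul_one]
    ring
  · have hc : (n : ℂ) * I ≠ 0 := mul_ne_zero (by exact_mod_cast hn) I_ne_zero
    have hperiod : cexp (n * I * π) = cexp (n * I * ((-π : ℝ) : ℂ)) := by
      rw [show (n : ℂ) * I * π = n * I * ((-π : ℝ) : ℂ) + n * (2 * π * I) by push_cast; ring,
        Complex.exp_add, exp_int_mul_two_pi_mul_I, mul_one]
    simp_rw [mul_right_comm (n : ℂ) _ I]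
    rw [integral_exp_mul_complex hc, hperiod, sub_self, zero_div]

lemma integral_Ioi_pow_mul_exp_neg_sq (A : ℕ) :
    ∫ r in Set.Ioi (0 : ℝ), r ^ (2 * A + 1) * Real.exp (-r ^ 2) = A ! / 2 := by
  have h := _root_.integral_rpow_mul_exp_neg_rpow (p := 2) (q := ((2 * A + 1 : ℕ) : ℝ)) two_pos
    (by linarith [(2 * A + 1 : ℕ).cast_nonneg (α := ℝ)])
  simp only [Real.rpow_natCast, Real.rpow_two] at h
  rw [h, show (((2 * A + 1 : ℕ) : ℝ) + 1) / 2 = A + 1 by push_cast; ring,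
    Real.Gamma_nat_eq_factorial]
  ring

lemma integral_conj_pow_mul_pow_mul_exp_neg_norm_sq (A B : ℕ) :
    ∫ z : ℂ, conj z ^ A * z ^ B * (Real.exp (-‖z‖ ^ 2) : ℂ) =
      if A = B then (π * A ! : ℂ) else 0 := by
  rw [← Complex.integral_comp_polarCoord_symm]
  have hpolar : ∀ p : ℝ × ℝ,
      p.1 • (conj (Complex.polarCoord.symm p) ^ A * Complex.polarCoord.symm p ^ B *
        (Real.exp (-‖Complex.polarCoord.symm p‖ ^ 2) : ℂ)) =
      ((p.1 ^ (A + B + 1) * Real.exp (-p.1 ^ 2) : ℝ) : ℂ) * cexp (((B : ℤ) - A : ℤ) * p.2 * I) := by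
    rintro ⟨r, θ⟩
    have hz : Complex.polarCoord.symm (r, θ) = r * cexp (θ * I) := by
      rw [Complex.polarCoord_symm_apply, Complex.exp_mul_I, ← ofReal_cos, ← ofReal_sin]
    have hphase : cexp (-(θ * I)) ^ A * cexp (θ * I) ^ B = cexp (((B : ℤ) - A : ℤ) * θ * I) := by
      rw [← Complex.exp_nat_mul, ← Complex.exp_nat_mul, ← Complex.exp_add]
      push_cast
      ring_nf
    rw [norm_polarCoord_symm, sq_abs, hz, map_mul, conj_ofReal, ← Complex.exp_conj, map_mul,
      conj_ofReal, conj_I, mul_neg, real_smul, ← hphase]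
    push_cast
    ring
  simp_rw [hpolar]
  rw [polarCoord_target, Measure.volume_eq_prod,
    setIntegral_prod_mul (fun r : ℝ ↦ ((r ^ (A + B + 1) * Real.exp (-r ^ 2) : ℝ) : ℂ))
      (fun θ : ℝ ↦ cexp (((B : ℤ) - A : ℤ) * θ * I)), integral_exp_int_mul_I]
  split_ifs with hBA hAB hAB
  · subst hAB
    rw [integral_complex_ofReal, ← two_mul, integral_Ioi_pow_mul_exp_neg_sq]
    push_cast
    ring
  · omega
  · omega
  · rw [mul_zero]
def complexHermite (m n : ℕ) (z : ℂ) : ℂ :=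
  ∑ j ∈ range (min m n + 1), (hermiteCoeff m n j : ℂ) * conj z ^ (m - j) * z ^ (n - j)

theorem integral_conj_complexHermite_mul_complexHermite (m n k l : ℕ) :
    ∫ z : ℂ, conj (complexHermite m n z) * complexHermite k l z * (Real.exp (-‖z‖ ^ 2) : ℂ) =
      if m = k ∧ n = l then (π * m ! * n ! : ℂ) else 0 := by
  have hexpand : ∀ z : ℂ,
      conj (complexHermite m n z) * complexHermite k l z * (Real.exp (-‖z‖ ^ 2) : ℂ) =
        ∑ j ∈ range (min m n + 1), ∑ i ∈ range (min k l + 1),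
          (hermiteCoeff m n j * hermiteCoeff k l i : ℂ) *
            (conj z ^ (n - j + (k - i)) * z ^ (m - j + (l - i)) * (Real.exp (-‖z‖ ^ 2) : ℂ)) := by
    intro z
    simp only [complexHermite, map_sum, map_mul, map_pow, map_intCast, conj_conj]
    rw [sum_mul_sum, sum_mul]
    refine sum_congr rfl fun j _ ↦ ?_
    rw [sum_mul]
    refine sum_congr rfl fun i _ ↦ ?_
    ring
  have hintegrable := integrable_conj_pow_mul_pow_mul_exp_neg_norm_sq
  simp_rw [hexpand]
  rw [integral_finsetSum _ fun j _ ↦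
    integrable_finsetSum _ fun i _ ↦ (hintegrable _ _).const_mul _]
  simp_rw [integral_finsetSum _ fun i _ ↦ (hintegrable _ _).const_mul _, integral_const_mul,
    integral_conj_pow_mul_pow_mul_exp_neg_norm_sq]
  by_cases h : n + k = m + l
  · have hterm : ∀ j ∈ range (min m n + 1), ∀ i ∈ range (min k l + 1),
        (hermiteCoeff m n j * hermiteCoeff k l i : ℂ) *
          (if n - j + (k - i) = m - j + (l - i) then (π * (n - j + (k - i))! : ℂ) else 0) =
        π * ((hermiteCoeff m n j * hermiteCoeff k l i * (n - j + (k - i))! : ℤ) : ℂ) := by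
      intro j hj i hi
      rw [mem_range] at hj hi
      rw [if_pos (by omega)]
      push_cast
      ring
    simp_rw [sum_congr rfl fun j hj ↦ sum_congr rfl (hterm j hj), ← mul_sum, ← Int.cast_sum,
      sum_sum_hermiteCoeff_mul_factorial h]
    by_cases hmk : m = k
    · obtain rfl : n = l := by omega
      simp [hmk, mul_assoc]
    · simp [hmk]
  · rw [if_neg (by omega)]
    refine sum_eq_zero fun j hj ↦ sum_eq_zero fun i hi ↦ ?_
    rw [mem_range] at hj hi
    rw [if_neg (by omega), mul_zero]

lemma abar_re_im (z : ℂ) : abar (z.re, z.im) = conj z / (√2 : ℝ) := by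
  rw [abar, ← re_add_im z, map_add, map_mul, conj_ofReal, conj_ofReal, conj_I]
  simp only [re_add_im]
  ring

lemma aop_re_im (z : ℂ) : aop (z.re, z.im) = z / (√2 : ℝ) := by
  rw [aop, mul_comm I]
  simp only [re_add_im]

lemma f0_re_im (z : ℂ) : f0 (z.re, z.im) = 2 * (Real.exp (-‖z‖ ^ 2 / 2) : ℂ) := by
  rw [f0, Complex.sq_norm, normSq_apply]
  push_cast
  ring_nf

lemma fmn_re_im (m n : ℕ) (z : ℂ) :
    fmn m n (z.re, z.im) =
      2 * (√(m ! * n ! : ℝ) : ℂ)⁻¹ * complexHermite m n z * (Real.exp (-‖z‖ ^ 2 / 2) : ℂ) := by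
  have hs : ((√2 : ℝ) : ℂ) ^ 2 = 2 := by
    rw [← ofReal_pow, Real.sq_sqrt zero_le_two, ofReal_ofNat]
  have hnorm : √(2 ^ (m + n) * m ! * n ! : ℝ) = √2 ^ (m + n) * √(m ! * n ! : ℝ) := by
    rw [mul_assoc, Real.sqrt_mul (by positivity),
      show (2 : ℝ) ^ (m + n) = (√2 ^ (m + n)) ^ 2 by
        rw [← pow_mul, mul_comm, pow_mul, Real.sq_sqrt zero_le_two],
      Real.sqrt_sq (by positivity)]
  have hterm : ∀ j ∈ range (min m n + 1),
      (2 : ℂ) ^ (m + n - j) * (conj z / (√2 : ℝ)) ^ (m - j) * (z / (√2 : ℝ)) ^ (n - j) =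
        ((√2 : ℝ) : ℂ) ^ (m + n) * (conj z ^ (m - j) * z ^ (n - j)) := by
    intro j hj
    rw [mem_range] at hj
    rw [← hs, ← pow_mul, show 2 * (m + n - j) = (m + n) + (m - j) + (n - j) by omega,
      pow_add, pow_add, div_pow, div_pow]
    field_simp
  have hsum : ∑ j ∈ range (min m n + 1),
      (-1 : ℂ) ^ j * (m.choose j : ℂ) * (n.choose j : ℂ) * (j ! : ℂ) * 2 ^ (m + n - j) *
        abar (z.re, z.im) ^ (m - j) * aop (z.re, z.im) ^ (n - j) * f0 (z.re, z.im) =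
      ((√2 : ℝ) : ℂ) ^ (m + n) * 2 * (Real.exp (-‖z‖ ^ 2 / 2) : ℂ) * complexHermite m n z := by
    rw [complexHermite, mul_sum]
    refine sum_congr rfl fun j hj ↦ ?_
    rw [abar_re_im, aop_re_im, f0_re_im, hermiteCoeff]
    simp only [Int.cast_mul, Int.cast_pow, Int.cast_neg, Int.cast_one, Int.cast_natCast]
    linear_combination ((-1 : ℂ) ^ j * (m.choose j : ℂ) * (n.choose j : ℂ) * (j ! : ℂ) * 2 *
      (Real.exp (-‖z‖ ^ 2 / 2) : ℂ)) * hterm j hj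
  rw [fmn, hsum, hnorm]
  push_cast
  field_simp

theorem fmn_orthonormal (m n k l : ℕ) :
    ((1 : ℂ) / 2) * ∫ u, (starRingEnd ℂ) (fmn m n u) * fmn k l u ∂mes2
      = if m = k ∧ n = l then 1 else 0 := by
  have hpair : ∀ z : ℂ, conj (fmn m n (z.re, z.im)) * fmn k l (z.re, z.im) =
      4 * ((√(m ! * n ! : ℝ) : ℂ) * (√(k ! * l ! : ℝ) : ℂ))⁻¹ *
        (conj (complexHermite m n z) * complexHermite k l z * (Real.exp (-‖z‖ ^ 2) : ℂ)) := by
    intro z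
    have hexp : Real.exp (-‖z‖ ^ 2) = Real.exp (-‖z‖ ^ 2 / 2) * Real.exp (-‖z‖ ^ 2 / 2) := by
      rw [← Real.exp_add]
      ring_nf
    rw [fmn_re_im, fmn_re_im, hexp]
    simp only [map_mul, map_inv₀, conj_ofReal, map_ofNat, ofReal_mul]
    ring
  rw [mes2, integral_smul_measure,
    ← volume_preserving_equiv_real_prod.integral_comp' (fun u ↦ conj (fmn m n u) * fmn k l u)]
  simp only [measurableEquivRealProd_apply, hpair]
  rw [integral_const_mul, integral_conj_complexHermite_mul_complexHermite]
  split_ifs with h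
  · obtain ⟨rfl, rfl⟩ := h
    have hsq : (√(m ! * n ! : ℝ) : ℂ) * (√(m ! * n ! : ℝ) : ℂ) = m ! * n ! := by
      rw [← ofReal_mul, Real.mul_self_sqrt (by positivity)]
      push_cast
      ring
    have hm : (m ! : ℂ) ≠ 0 := Nat.cast_ne_zero.mpr (Nat.factorial_ne_zero m)
    have hn : (n ! : ℂ) ≠ 0 := Nat.cast_ne_zero.mpr (Nat.factorial_ne_zero n)
    rw [hsq, ENNReal.toReal_inv, ENNReal.toReal_ofReal (by positivity), Complex.real_smul]
    push_cast
    field_simp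
    norm_num
  · simp
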